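/- arXiv:2204.01785 — 3 statements merged into one kernel-verified Lean document; each statement's English description precedes it below -/
import Mathlib

section
/- Let u ∈ C²([a,b]) with u(a)=u(b)=0, u^n the vector of nodal values u(x_j), and u^h the solution of the singular system J u^h = (1/h)(∫_a^b u)·1 closest to u^n in Euclidean norm (J the n×n all-ones matrix). Then ‖u^h − u^n‖_∞ ≤ C h² for a constant C independent of h. -/
open MeasureTheory intervalIntegral Matrix

/-!
Since `J v = (∑ v) • 1`, the constraint is the hyperplane `∑ v = c` with `c = (1/h) ∫ u`, and
the point of it closest to `uⁿ` is `uⁿ` shifted by the constant `(c - ∑ uⁿ) / n`. Because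
`u a = u b = 0`, `h ∑ uⁿ` is exactly the composite trapezoidal approximation of `∫ u`, whose
error is at most `(b - a)³ M / (12 N²) = N h³ M / 12`; hence the shift is at most
`N h² M / (12 (N - 1)) ≤ M h² / 6`.
-/

/- Mathlib's trapezoidal error bound asks for a bound on `iteratedDerivWithin 2 f s x` at every
real `x`; off a closed `s` that derivative is the junk value `0`. -/
theorem abs_iteratedDerivWithin_le_of_isClosed {f : ℝ → ℝ} {s : Set ℝ} {M : ℝ} {n : ℕ}
    (hs : IsClosed s) (hne : s.Nonempty)
    (hM : ∀ x ∈ s, |iteratedDerivWithin (n + 1) f s x| ≤ M) (x : ℝ) :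
    |iteratedDerivWithin (n + 1) f s x| ≤ M := by
  by_cases hx : x ∈ s
  · exact hM x hx
  · obtain ⟨y, hy⟩ := hne
    rw [iteratedDerivWithin_succ, derivWithin_zero_of_notMem_closure (by rwa [hs.closure_eq]),
      abs_zero]
    exact (abs_nonneg _).trans (hM y hy)

theorem trapezoidal_integral_of_eq_zero {f : ℝ → ℝ} {a b : ℝ} (N : ℕ) (ha : f a = 0)
    (hb : f b = 0) :
    trapezoidal_integral f N a b =
      (b - a) / N * ∑ k : Fin (N - 1), f (a + ((k : ℕ) + 1) * ((b - a) / N)) := by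
  rw [trapezoidal_integral, ha, hb, ← Fin.sum_univ_eq_sum_range]
  simp only [mul_div_assoc]
  ring

theorem mulVec_eq_sum_of_forall_eq_one {m n R : Type*} [Fintype n] [NonAssocSemiring R]
    {J : Matrix m n R} (hJ : ∀ k l, J k l = 1) (v : n → R) :
    J *ᵥ v = fun _ => ∑ l, v l := by
  ext k
  simp [mulVec, dotProduct, hJ]

theorem eq_add_const_of_isMinOn_sum_sq_sub {ι : Type*} [Fintype ι] {w x : ι → ℝ} {c : ℝ}
    (hx : ∑ i, x i = c)
    (hmin : IsMinOn (fun v => ∑ i, (v i - w i) ^ 2) {v | ∑ i, v i = c} x) (i : ι) :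
    x i = w i + (c - ∑ j, w j) / Fintype.card ι := by
  set n : ℝ := (Fintype.card ι : ℝ)
  set d := (c - ∑ j, w j) / n
  have hnd : n * d = c - ∑ j, w j :=
    mul_div_cancel₀ _ (Nat.cast_ne_zero.mpr (Fintype.card_pos_iff.mpr ⟨i⟩).ne')
  have hsum : ∑ j, (x j - w j) = n * d := by
    rw [Finset.sum_sub_distrib, hx, hnd]
  have hle : ∑ j, (x j - w j) ^ 2 ≤ n * d ^ 2 := by
    have hshift : ∑ j, (w j + d) = c := by
      rw [Finset.sum_add_distrib, Finset.sum_const, Finset.card_univ, nsmul_eq_mul, hnd]; ring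
    simpa using isMinOn_iff.mp hmin (fun j => w j + d) hshift
  have hzero : ∑ j, (x j - w j - d) ^ 2 = 0 := by
    refine le_antisymm ?_ (Finset.sum_nonneg fun j _ => sq_nonneg _)
    calc ∑ j, (x j - w j - d) ^ 2
        = ∑ j, ((x j - w j) ^ 2 - 2 * d * (x j - w j) + d ^ 2) :=
          Finset.sum_congr rfl fun j _ => by ring
      _ = ∑ j, (x j - w j) ^ 2 - 2 * d * ∑ j, (x j - w j) + n * d ^ 2 := by
          rw [Finset.sum_add_distrib, Finset.sum_sub_distrib, ← Finset.mul_sum, Finset.sum_const,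
            Finset.card_univ, nsmul_eq_mul, mul_comm]
      _ ≤ 0 := by rw [hsum]; nlinarith
  have := (Finset.sum_eq_zero_iff_of_nonneg fun j _ => sq_nonneg _).mp hzero i
    (Finset.mem_univ i)
  linarith [pow_eq_zero_iff two_ne_zero |>.mp this]

theorem abs_div_mul_integral_sub_sum_nodes_le {u : ℝ → ℝ} {a b M : ℝ} (hab : a < b)
    (hu : ContDiffOn ℝ 2 u (Set.Icc a b))
    (hM : ∀ x ∈ Set.Icc a b, |iteratedDerivWithin 2 u (Set.Icc a b) x| ≤ M)
    (hua : u a = 0) (hub : u b = 0) {N : ℕ} (hN : 0 < N) :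
    |N / (b - a) * (∫ x in a..b, u x) -
        ∑ k : Fin (N - 1), u (a + ((k : ℕ) + 1) * ((b - a) / N))|
      ≤ (b - a) ^ 2 * M / (12 * N) := by
  have hba : 0 < b - a := sub_pos.mpr hab
  have hNpos : (0 : ℝ) < N := Nat.cast_pos.mpr hN
  have hM' := abs_iteratedDerivWithin_le_of_isClosed isClosed_Icc
    (Set.nonempty_Icc.mpr hab.le) hM
  rw [← Set.uIcc_of_le hab.le] at hu hM'
  have herr := trapezoidal_error_le_of_c2 hu hM' hN
  rw [trapezoidal_error, trapezoidal_integral_of_eq_zero N hua hub, abs_of_pos hba] at herr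
  set S := ∑ k : Fin (N - 1), u (a + ((k : ℕ) + 1) * ((b - a) / N))
  have hscale : N / (b - a) * (∫ x in a..b, u x) - S
      = -(N / (b - a)) * ((b - a) / N * S - ∫ x in a..b, u x) := by
    field_simp; ring
  rw [hscale, abs_mul, abs_neg, abs_of_pos (by positivity)]
  calc N / (b - a) * |_| ≤ N / (b - a) * ((b - a) ^ 3 * M / (12 * N ^ 2)) := by gcongr
    _ = (b - a) ^ 2 * M / (12 * N) := by field_simp

/-- For u ∈ C²([a,b]) with u(a)=u(b)=0, the solution u^h of the singular system
J u^h = (1/h)(∫u)·1 closest to the nodal vector u^n satisfies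
‖u^h − u^n‖_∞ ≤ C h² with C independent of h. -/
theorem closest_solution_error_bound (a b : ℝ) (hab : a < b) (u : ℝ → ℝ) (M : ℝ)
    (hu : ContDiffOn ℝ 2 u (Set.Icc a b))
    (hM : ∀ x ∈ Set.Icc a b, |iteratedDerivWithin 2 u (Set.Icc a b) x| ≤ M)
    (hua : u a = 0) (hub : u b = 0) :
    ∃ C : ℝ, ∀ N : ℕ, 2 ≤ N → ∀ h : ℝ, h = (b - a) / N →
      ∀ J : Matrix (Fin (N - 1)) (Fin (N - 1)) ℝ, (∀ k l, J k l = 1) →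
      ∀ un uh : Fin (N - 1) → ℝ,
        (∀ k, un k = u (a + ((k : ℕ) + 1) * h)) →
        (J.mulVec uh = fun _ => (1 / h) * ∫ x in a..b, u x) →
        (∀ v : Fin (N - 1) → ℝ,
          (J.mulVec v = fun _ => (1 / h) * ∫ x in a..b, u x) →
          ∑ k, (uh k - un k) ^ 2 ≤ ∑ k, (v k - un k) ^ 2) →
        ∀ k, |uh k - un k| ≤ C * h ^ 2 := by
  have hM0 : 0 ≤ M := (abs_nonneg _).trans (hM a ⟨le_rfl, hab.le⟩)
  refine ⟨M / 6, fun N hN h hh J hJ un uh hun hJuh hmin k => ?_⟩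
  set c := (1 / h) * ∫ x in a..b, u x
  simp only [mulVec_eq_sum_of_forall_eq_one hJ] at hJuh hmin
  have hclosest : uh k - un k = (c - ∑ l, un l) / (N - 1 : ℕ) := by
    rw [eq_add_const_of_isMinOn_sum_sq_sub (congrFun hJuh k)
      (fun v hv => hmin v (funext fun _ => hv)) k, Fintype.card_fin]
    ring
  have hnodes : |c - ∑ l, un l| ≤ N * h ^ 2 * M / 12 := by
    have hc : c = N / (b - a) * ∫ x in a..b, u x := by simp only [c, hh, one_div, inv_div]
    have hbound : (b - a) ^ 2 * M / (12 * N) = N * h ^ 2 * M / 12 := by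
      rw [hh]; field_simp
    have := abs_div_mul_integral_sub_sum_nodes_le hab hu hM hua hub (by omega : 0 < N)
    simp only [← hh, ← hun] at this
    rwa [hc, ← hbound]
  have hN1 : ((N - 1 : ℕ) : ℝ) = N - 1 := by push_cast [show 1 ≤ N by omega]; ring
  have hN2 : (2 : ℝ) ≤ N := by exact_mod_cast hN
  rw [hclosest, abs_div, hN1, abs_of_pos (a := (N : ℝ) - 1) (by linarith),
    div_le_iff₀ (by linarith)]
  nlinarith [mul_nonneg (mul_nonneg hM0 (sq_nonneg h)) (sub_nonneg.mpr hN2)]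
end

section
/- In the setting of the perturbed system, if the column index j is held fixed as n → ∞ and u(x) = O((x−a)^q) near a (with u (q times differentiable, leading Taylor term of order q at a)), then ‖u^h − u^n‖_∞ = O(h^{min(q,2)}). -/
/-!
For `δ ≠ 0` and at least two unknowns, the rows of `(J + δ E_{ij}) v = c 𝟙` say exactly that
`∑ v = c` and `v_j = 0`. Moving the nearest solution `uʰ` along `e_k - e_l` (`k, l ≠ j`) shows
that `uʰ - uⁿ` equals `-uⁿ_j` at `j` and a constant `t` elsewhere, and summing gives
`(n - 1) t = c - ∑ uⁿ + uⁿ_j` for `n` unknowns. As `u(a) = u(b) = 0`, `h (c - ∑ uⁿ)` is the error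
of the composite trapezoidal rule, so `c - ∑ uⁿ = O(N h²)`, while `uⁿ_j = u(a + (j + 1) h) = O(h^q)`
because `j` is fixed. Hence the error is `O(h^q)` at `j` and `O(h² + h^q)` elsewhere. With a single
unknown (`N = 2`) the mesh is fixed and the system is solved directly.
-/

open MeasureTheory intervalIntegral Matrix

theorem abs_iteratedDerivWithin_two_le {f : ℝ → ℝ} {s : Set ℝ} (hs : IsClosed s) {M : ℝ}
    (hM0 : 0 ≤ M) (hM : ∀ x ∈ s, |iteratedDerivWithin 2 f s x| ≤ M) (x : ℝ) :
    |iteratedDerivWithin 2 f s x| ≤ M := by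
  by_cases hx : x ∈ s
  · exact hM x hx
  · rw [iteratedDerivWithin_succ, derivWithin_zero_of_notMem_closure (by rwa [hs.closure_eq]),
      abs_zero]
    exact hM0

theorem abs_integral_div_sub_sum_le {u : ℝ → ℝ} {a b M : ℝ} (hab : a < b)
    (hu : ContDiffOn ℝ 2 u (Set.Icc a b))
    (hM : ∀ x ∈ Set.Icc a b, |iteratedDerivWithin 2 u (Set.Icc a b) x| ≤ M)
    (hua : u a = 0) (hub : u b = 0) {N : ℕ} (hN : 0 < N) {h : ℝ} (hh : h = (b - a) / N) :
    |(1 / h) * (∫ x in a..b, u x) - ∑ k : Fin (N - 1), u (a + ((k : ℕ) + 1) * h)|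
      ≤ M * N * h ^ 2 / 12 := by
  have hM0 : 0 ≤ M := (abs_nonneg _).trans (hM a ⟨le_rfl, hab.le⟩)
  rw [← Set.uIcc_of_le hab.le] at hu hM
  have htrap := trapezoidal_error_le_of_c2 hu
    (abs_iteratedDerivWithin_two_le isClosed_Icc hM0 hM) hN
  have hNr : (0 : ℝ) < N := by exact_mod_cast hN
  have hba : b - a = N * h := by rw [hh]; field_simp
  have hpos : 0 < h := by rw [hh]; exact div_pos (by linarith) hNr
  set S := ∑ k : Fin (N - 1), u (a + ((k : ℕ) + 1) * h)
  have hsum : trapezoidal_integral u N a b = h * S := by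
    rw [trapezoidal_integral, hua, hub, ← hh,
      show S = _ from Fin.sum_univ_eq_sum_range (fun k => u (a + (k + 1) * h)) (N - 1)]
    simp [mul_div_assoc, ← hh]
  rw [trapezoidal_error, hsum, abs_sub_comm, hba, abs_of_pos (mul_pos hNr hpos)] at htrap
  have hdiv : (1 / h) * (∫ x in a..b, u x) - S = ((∫ x in a..b, u x) - h * S) / h := by
    field_simp
  rw [hdiv, abs_div, abs_of_pos hpos, div_le_iff₀ hpos]
  calc _ ≤ (N * h) ^ 3 * M / (12 * N ^ 2) := htrap
    _ = M * N * h ^ 2 / 12 * h := by field_simp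

theorem abs_add_mul_le_of_abs_le_mul_pow {u : ℝ → ℝ} {a b K : ℝ} {q : ℕ} (hab : a < b)
    (hq : ∀ x ∈ Set.Icc a b, |u x| ≤ K * (x - a) ^ q) {N : ℕ} {h : ℝ} (hh : h = (b - a) / N)
    {t : ℝ} (ht0 : 0 ≤ t) (htN : t ≤ N) :
    |u (a + t * h)| ≤ K * t ^ q * h ^ q := by
  have hh0 : 0 ≤ h := hh ▸ div_nonneg (sub_pos.2 hab).le N.cast_nonneg
  have hth : t * h ≤ b - a := by
    rcases N.eq_zero_or_pos with rfl | hN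
    · simp [hh, (sub_pos.2 hab).le]
    · calc t * h ≤ N * h := mul_le_mul_of_nonneg_right htN hh0
        _ = b - a := by rw [hh]; field_simp
  simpa [mul_pow, mul_assoc] using
    hq (a + t * h) ⟨le_add_of_nonneg_right (mul_nonneg ht0 hh0), by linarith⟩

theorem pow_le_pow_sub_mul_pow {h D : ℝ} (h0 : 0 ≤ h) (hD : h ≤ D) {m p : ℕ} (hmp : m ≤ p) :
    h ^ p ≤ D ^ (p - m) * h ^ m := by
  rw [← pow_sub_mul_pow h hmp]
  exact mul_le_mul_of_nonneg_right (pow_le_pow_left₀ h0 hD _) (pow_nonneg h0 _)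

theorem mul_sq_add_mul_pow_le {h D A B : ℝ} (h0 : 0 ≤ h) (hD : h ≤ D) (hA : 0 ≤ A)
    (hB : 0 ≤ B) (q : ℕ) :
    A * h ^ 2 + B * h ^ q ≤ (A * D ^ (2 - min q 2) + B * D ^ (q - min q 2)) * h ^ min q 2 := by
  calc A * h ^ 2 + B * h ^ q
      ≤ A * (D ^ (2 - min q 2) * h ^ min q 2) + B * (D ^ (q - min q 2) * h ^ min q 2) := by
        gcongr A * ?_ + B * ?_
        · exact pow_le_pow_sub_mul_pow h0 hD (min_le_right q 2)
        · exact pow_le_pow_sub_mul_pow h0 hD (min_le_left q 2)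
    _ = _ := by ring

section NearestSolution

variable {ι : Type*} [Fintype ι]

def IsNearestSolution (A : Matrix ι ι ℝ) (c x y : ι → ℝ) : Prop :=
  A *ᵥ x = c ∧ ∀ v, A *ᵥ v = c → ∑ l, (x l - y l) ^ 2 ≤ ∑ l, (v l - y l) ^ 2

theorem sum_mul_eq_zero_of_forall_sum_sq_le {d w : ι → ℝ}
    (h : ∀ ε : ℝ, ∑ l, d l ^ 2 ≤ ∑ l, (d l + ε * w l) ^ 2) : ∑ l, d l * w l = 0 := by
  set s := ∑ l, d l * w l
  set W := ∑ l, w l ^ 2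
  have hW : 0 ≤ W := Finset.sum_nonneg fun l _ => sq_nonneg (w l)
  have hexpand : ∀ ε : ℝ, ∑ l, (d l + ε * w l) ^ 2 = ∑ l, d l ^ 2 + 2 * ε * s + ε ^ 2 * W := by
    intro ε
    simp only [s, W, Finset.mul_sum, ← Finset.sum_add_distrib]
    exact Finset.sum_congr rfl fun l _ => by ring
  -- the quadratic `2 ε s + ε² W` is negative at `ε = -s / (W + 1)` unless `s = 0`
  have h' := h (-s / (W + 1))
  rw [hexpand] at h'
  have hW1 : 0 < W + 1 := by linarith
  have : s ^ 2 * (W + 2) ≤ 0 := by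
    have := mul_le_mul_of_nonneg_right h' (sq_nonneg (W + 1))
    field_simp at this
    nlinarith
  nlinarith [sq_nonneg s]

variable [DecidableEq ι]

theorem sub_eq_sub_of_forall_sum_sq_le {x y : ι → ℝ} {j : ι}
    (hmin : ∀ v : ι → ℝ, ∑ l, v l = ∑ l, x l → v j = x j →
      ∑ l, (x l - y l) ^ 2 ≤ ∑ l, (v l - y l) ^ 2)
    {k k' : ι} (hk : k ≠ j) (hk' : k' ≠ j) : x k - y k = x k' - y k' := by
  set w : ι → ℝ := Pi.single k 1 - Pi.single k' 1
  have hw : ∀ ε : ℝ, ∑ l, (x l - y l) ^ 2 ≤ ∑ l, ((x l - y l) + ε * w l) ^ 2 := by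
    intro ε
    convert hmin (x + ε • w) ?_ ?_ using 3 with l
    · simp only [Pi.add_apply, Pi.smul_apply, smul_eq_mul]; ring
    · simp [w, Finset.sum_add_distrib, ← Finset.mul_sum, Finset.sum_sub_distrib]
    · simp [w, hk.symm, hk'.symm]
  have := sum_mul_eq_zero_of_forall_sum_sq_le hw
  by_cases hkk : k = k'
  · rw [hkk]
  · simp [w, mul_sub, Finset.sum_sub_distrib, Pi.single_apply] at this
    linarith

theorem mulVec_add_single_apply_of_forall_eq_one {J : Matrix ι ι ℝ} (hJ : ∀ k l, J k l = 1)
    (i j : ι) (δ : ℝ) (v : ι → ℝ) (r : ι) :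
    ((J + single i j δ) *ᵥ v) r = ∑ l, v l + if r = i then δ * v j else 0 := by
  rw [add_mulVec, single_mulVec]
  simp [mulVec, dotProduct, hJ, Function.update_apply]

theorem mulVec_add_single_eq_const_iff {J : Matrix ι ι ℝ} (hJ : ∀ k l, J k l = 1)
    {i r : ι} (hr : r ≠ i) (j : ι) {δ : ℝ} (hδ : δ ≠ 0) (c : ℝ) (v : ι → ℝ) :
    (J + single i j δ) *ᵥ v = (fun _ => c) ↔ ∑ l, v l = c ∧ v j = 0 := by
  simp only [funext_iff, mulVec_add_single_apply_of_forall_eq_one hJ]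
  constructor
  · intro h
    have hsum : ∑ l, v l = c := by simpa [hr] using h r
    refine ⟨hsum, ?_⟩
    have := h i
    simp only [if_true, hsum, add_eq_left, mul_eq_zero] at this
    exact this.resolve_left hδ
  · rintro ⟨hsum, hj⟩ s
    simp [hsum, hj]

namespace IsNearestSolution

variable {J : Matrix ι ι ℝ} {i j : ι} {δ c : ℝ} {x y : ι → ℝ}

theorem apply_eq_zero_and_card_sub_one_mul_sub_eq (hJ : ∀ k l, J k l = 1) {r : ι} (hr : r ≠ i)
    (hδ : δ ≠ 0) (hx : IsNearestSolution (J + single i j δ) (fun _ => c) x y) :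
    x j = 0 ∧ ∀ k ≠ j, ((Fintype.card ι : ℝ) - 1) * (x k - y k) = c - ∑ l, y l + y j := by
  have hsol := mulVec_add_single_eq_const_iff hJ hr j hδ c
  obtain ⟨hsum, hj⟩ := (hsol x).1 hx.1
  refine ⟨hj, fun k hk => ?_⟩
  have hconst : ∀ l ∈ Finset.univ.erase j, x l - y l = x k - y k := fun l hl =>
    sub_eq_sub_of_forall_sum_sq_le
      (fun v hv hvj => hx.2 v ((hsol v).2 ⟨hv.trans hsum, hvj.trans hj⟩))
      (Finset.ne_of_mem_erase hl) hk
  have hsplit := Finset.add_sum_erase Finset.univ (fun l => x l - y l) (Finset.mem_univ j)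
  rw [Finset.sum_congr rfl hconst, Finset.sum_const, Finset.card_erase_of_mem (Finset.mem_univ j),
    Finset.card_univ, nsmul_eq_mul, Nat.cast_pred (Fintype.card_pos_iff.2 ⟨j⟩),
    Finset.sum_sub_distrib, hsum, hj] at hsplit
  linarith

-- For `δ = -1` the right-hand side is `0` (division by zero), and then indeed `x = y`.
theorem abs_sub_le_of_subsingleton [Subsingleton ι] (hJ : ∀ k l, J k l = 1)
    (hx : IsNearestSolution (J + single i j δ) (fun _ => c) x y) :
    |x j - y j| ≤ (|c - y j| + |δ| * |y j|) / |1 + δ| := by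
  obtain rfl := Subsingleton.elim i j
  have hsol : ∀ v : ι → ℝ, (J + single i i δ) *ᵥ v = (fun _ => c) ↔ (1 + δ) * v i = c := by
    intro v
    simp only [funext_iff, mulVec_add_single_apply_of_forall_eq_one hJ,
      Fintype.sum_subsingleton _ i]
    refine ⟨fun h => by linarith [if_pos rfl ▸ h i], fun h r => ?_⟩
    rw [if_pos (Subsingleton.elim r i)]
    linarith
  have hxi := (hsol x).1 hx.1
  by_cases hδ1 : 1 + δ = 0
  · have hy := hx.2 y ((hsol y).2 (by rw [← hxi, hδ1, zero_mul, zero_mul]))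
    simp only [sub_self, Fintype.sum_subsingleton _ i] at hy
    have hxy : x i - y i = 0 := by nlinarith [sq_nonneg (x i - y i)]
    simp [hxy, hδ1]
  · rw [le_div_iff₀ (abs_pos.2 hδ1), ← abs_mul]
    calc |(x i - y i) * (1 + δ)| = |(c - y i) - δ * y i| := by rw [← hxi]; ring_nf
      _ ≤ |c - y i| + |δ| * |y i| := by rw [← abs_mul]; exact abs_sub _ _

theorem abs_sub_le (hJ : ∀ k l, J k l = 1) (hδ : δ ≠ 0)
    (hx : IsNearestSolution (J + single i j δ) (fun _ => c) x y) {E F : ℝ}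
    (hc : |c - ∑ l, y l| ≤ (Fintype.card ι + 1) * E) (hy : |y j| ≤ F) (k : ι) :
    |x k - y k| ≤ (3 + 2 * (1 + |δ|) / |1 + δ|) * (E + F) := by
  have hE : 0 ≤ E := nonneg_of_mul_nonneg_right ((abs_nonneg _).trans hc) (by positivity)
  have hF : 0 ≤ F := (abs_nonneg _).trans hy
  have hκ : 0 ≤ 2 * (1 + |δ|) / |1 + δ| := by positivity
  rcases subsingleton_or_nontrivial ι with hι | hι
  · obtain rfl := Subsingleton.elim k j
    have hc' : |c - y k| ≤ 2 * E := by
      simpa [Fintype.sum_subsingleton _ k, one_add_one_eq_two,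
        Fintype.card_eq_one_iff.2 ⟨k, fun l => Subsingleton.elim l k⟩] using hc
    calc |x k - y k| ≤ (|c - y k| + |δ| * |y k|) / |1 + δ| := hx.abs_sub_le_of_subsingleton hJ
      _ ≤ 2 * (1 + |δ|) * (E + F) / |1 + δ| := by
          gcongr
          nlinarith [abs_nonneg δ]
      _ ≤ (3 + 2 * (1 + |δ|) / |1 + δ|) * (E + F) := by
          rw [mul_div_right_comm]
          nlinarith
  · obtain ⟨r, hr⟩ := exists_ne i
    obtain ⟨hxj, hcard⟩ := hx.apply_eq_zero_and_card_sub_one_mul_sub_eq hJ hr hδ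
    by_cases hkj : k = j
    · rw [hkj, hxj, zero_sub, abs_neg]
      nlinarith
    have hn : (2 : ℝ) ≤ Fintype.card ι := by exact_mod_cast Fintype.one_lt_card
    have hk := congrArg abs (hcard k hkj)
    rw [abs_mul, abs_of_pos (by linarith)] at hk
    have hsum : |c - ∑ l, y l + y j| ≤ (Fintype.card ι + 1) * E + F :=
      (abs_add_le _ _).trans (add_le_add hc hy)
    have hkE : |x k - y k| ≤ 3 * E + F := by
      refine le_of_mul_le_mul_left ?_ (by linarith : (0 : ℝ) < Fintype.card ι - 1)
      rw [hk]
      nlinarith [mul_nonneg (by linarith : (0 : ℝ) ≤ Fintype.card ι - 2) hE,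
        mul_nonneg (by linarith : (0 : ℝ) ≤ Fintype.card ι - 2) hF]
    nlinarith [mul_nonneg hκ (add_nonneg hE hF)]

end IsNearestSolution

end NearestSolution

/-- Perturbed system with fixed column index j: if u(x) = O((x−a)^q) near a,
then ‖u^h − u^n‖_∞ = O(h^{min(q,2)}). -/
theorem perturbed_fixed_index_error_order (a b : ℝ) (hab : a < b)
    (u : ℝ → ℝ) (M K : ℝ) (q : ℕ)
    (hu : ContDiffOn ℝ 2 u (Set.Icc a b))
    (hM : ∀ x ∈ Set.Icc a b, |iteratedDerivWithin 2 u (Set.Icc a b) x| ≤ M)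
    (hua : u a = 0) (hub : u b = 0)
    (hq : ∀ x ∈ Set.Icc a b, |u x| ≤ K * (x - a) ^ q)
    (δ : ℝ) (hδ : δ ≠ 0) (j : ℕ) :
    ∃ C : ℝ, ∀ N : ℕ, j + 2 ≤ N → ∀ hjN : j < N - 1, ∀ h : ℝ, h = (b - a) / N →
      ∀ i : Fin (N - 1),
      ∀ J A : Matrix (Fin (N - 1)) (Fin (N - 1)) ℝ, (∀ k l, J k l = 1) →
        A = J + Matrix.single i ⟨j, hjN⟩ δ →
      ∀ un uh : Fin (N - 1) → ℝ,
        (∀ k, un k = u (a + ((k : ℕ) + 1) * h)) →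
        (A.mulVec uh = fun _ => (1 / h) * ∫ x in a..b, u x) →
        (∀ v : Fin (N - 1) → ℝ,
          (A.mulVec v = fun _ => (1 / h) * ∫ x in a..b, u x) →
          ∑ k, (uh k - un k) ^ 2 ≤ ∑ k, (v k - un k) ^ 2) →
        ∀ k, |uh k - un k| ≤ C * h ^ (min q 2) := by
  have hM0 : 0 ≤ M := (abs_nonneg _).trans (hM a ⟨le_rfl, hab.le⟩)
  have hK0 : 0 ≤ K := nonneg_of_mul_nonneg_left ((abs_nonneg _).trans (hq b ⟨hab.le, le_rfl⟩))
    (pow_pos (sub_pos.2 hab) q)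
  refine ⟨(3 + 2 * (1 + |δ|) / |1 + δ|) *
    (M * (b - a) ^ (2 - min q 2) + K * ((j : ℝ) + 1) ^ q * (b - a) ^ (q - min q 2)), ?_⟩
  rintro N hjN2 hjN h hh i J A hJ rfl un uh hun huh hmin k
  have hpos : 0 < h := hh ▸ div_pos (sub_pos.2 hab) (Nat.cast_pos.2 (by omega))
  have hhD : h ≤ b - a := hh ▸ div_le_self (sub_pos.2 hab).le (by exact_mod_cast (by omega : 1 ≤ N))
  have hquad : |(1 / h) * (∫ x in a..b, u x) - ∑ l, un l|
      ≤ (Fintype.card (Fin (N - 1)) + 1) * (M * h ^ 2) := by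
    rw [Fintype.card_fin, Nat.cast_pred (by omega), sub_add_cancel]
    simp only [hun]
    refine (abs_integral_div_sub_sum_le hab hu hM hua hub (by omega) hh).trans ?_
    linarith [show 0 ≤ M * N * h ^ 2 by positivity]
  have hunj : |un ⟨j, hjN⟩| ≤ K * ((j : ℝ) + 1) ^ q * h ^ q := by
    rw [hun]
    exact abs_add_mul_le_of_abs_le_mul_pow hab hq hh (by positivity)
      (by exact_mod_cast (by omega : j + 1 ≤ N))
  calc |uh k - un k|
      ≤ (3 + 2 * (1 + |δ|) / |1 + δ|) * (M * h ^ 2 + K * ((j : ℝ) + 1) ^ q * h ^ q) :=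
        IsNearestSolution.abs_sub_le hJ hδ ⟨huh, hmin⟩ hquad hunj k
    _ ≤ _ := (mul_le_mul_of_nonneg_left (mul_sq_add_mul_pow_le hpos.le hhD hM0 (by positivity) q)
        (by positivity)).trans_eq (mul_assoc _ _ _).symm
end

section
/- For the perturbed system, the truncation error (with the paper's normalization) is τ_h(u) = δ u_j^n h e_i + O(h²). Consequently, if j is fixed, u has leading Taylor order q at a, and δ = δ(h) = O(h^r), then ‖τ_h(u)‖_∞ = O(h^{min(q+r+1, 2)}); in particular the perturbation is undetected (τ_h remains O(h²)) whenever q + r ≥ 1. -/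
open MeasureTheory intervalIntegral Matrix

/-!
As `J` is the all-ones matrix and `u` vanishes at both ends, `h (J uⁿ)_k` is the composite
trapezoidal rule for `∫ u`, whose error is `O(h²)` for `u ∈ C²`. The perturbation `δ E_{i,j}`
only adds `δ uⁿ_j h` to row `i`, and since `uⁿ_j = u(a + (j + 1) h)` with `j` fixed, the order
hypothesis gives `|uⁿ_j| ≤ K ((j + 1) h)^q`, so this term is `O(h^(q + r + 1))`.
-/

theorem iteratedDerivWithin_succ_eq_zero_of_notMem_closure {𝕜 F : Type*}
    [NontriviallyNormedField 𝕜] [NormedAddCommGroup F] [NormedSpace 𝕜 F] {f : 𝕜 → F}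
    {s : Set 𝕜} {x : 𝕜} (n : ℕ) (hx : x ∉ closure s) :
    iteratedDerivWithin (n + 1) f s x = 0 := by
  rw [iteratedDerivWithin_succ]
  exact derivWithin_zero_of_notMem_closure hx

theorem abs_trapezoidal_error_le_of_contDiffOn_Icc {f : ℝ → ℝ} {a b M : ℝ} (hab : a ≤ b)
    (hf : ContDiffOn ℝ 2 f (Set.Icc a b))
    (hM : ∀ x ∈ Set.Icc a b, |iteratedDerivWithin 2 f (Set.Icc a b) x| ≤ M)
    {N : ℕ} (hN : 0 < N) :
    |trapezoidal_error f N a b| ≤ (b - a) * M / 12 * ((b - a) / N) ^ 2 := by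
  have hM0 : 0 ≤ M := (abs_nonneg _).trans (hM a ⟨le_rfl, hab⟩)
  have hM' : ∀ x, |iteratedDerivWithin 2 f (Set.uIcc a b) x| ≤ M := by
    intro x
    rw [Set.uIcc_of_le hab]
    -- off `[a, b]` the second derivative within `[a, b]` takes the junk value `0`
    by_cases hx : x ∈ Set.Icc a b
    · exact hM x hx
    · rw [iteratedDerivWithin_succ_eq_zero_of_notMem_closure 1 (by rwa [closure_Icc]),
        abs_zero]
      exact hM0
  rw [← Set.uIcc_of_le hab] at hf
  calc _ ≤ |b - a| ^ 3 * M / (12 * N ^ 2) := trapezoidal_error_le_of_c2 hf hM' hN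
    _ = _ := by
      rw [abs_of_nonneg (sub_nonneg.2 hab)]
      field_simp

theorem trapezoidal_integral_of_endpoints_eq_zero {f : ℝ → ℝ} {a b : ℝ} (ha : f a = 0)
    (hb : f b = 0) (N : ℕ) :
    trapezoidal_integral f N a b
      = (b - a) / N * ∑ k ∈ Finset.range (N - 1), f (a + (k + 1) * ((b - a) / N)) := by
  simp [trapezoidal_integral, ha, hb, mul_div_assoc]

theorem add_mul_div_mem_Icc {a b : ℝ} (hab : a ≤ b) {k N : ℕ} (hkN : k ≤ N) :
    a + k * ((b - a) / N) ∈ Set.Icc a b := by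
  rcases N.eq_zero_or_pos with rfl | hN
  · simpa using hab
  have hN' : (0 : ℝ) < N := by exact_mod_cast hN
  have hk : (k : ℝ) / N ≤ 1 := div_le_one_of_le₀ (by exact_mod_cast hkN) hN'.le
  constructor
  · have : 0 ≤ (k : ℝ) * ((b - a) / N) := by have := sub_nonneg.2 hab; positivity
    linarith
  · rw [show (k : ℝ) * ((b - a) / N) = k / N * (b - a) by ring]
    nlinarith [sub_nonneg.2 hab]

theorem mulVec_const_one_add_single_apply {n α : Type*} [Fintype n] [DecidableEq n]
    [NonAssocSemiring α] {J : Matrix n n α} (hJ : ∀ k l, J k l = 1) (i j : n) (c : α)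
    (v : n → α) (k : n) :
    ((J + single i j c) *ᵥ v) k = ∑ l, v l + if k = i then c * v j else 0 := by
  rw [add_mulVec, single_mulVec]
  simp [mulVec, dotProduct, hJ, Function.update_apply]

theorem pow_le_mul_pow_min {h B : ℝ} (h0 : 0 ≤ h) (hB : h ≤ B) (hB1 : 1 ≤ B) (e n : ℕ) :
    h ^ e ≤ B ^ e * h ^ min e n := by
  calc h ^ e = h ^ min e n * h ^ (e - min e n) := by
        rw [← pow_add, Nat.add_sub_cancel' (min_le_left _ _)]
    _ ≤ h ^ min e n * B ^ e := by
      gcongr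
      calc h ^ (e - min e n) ≤ B ^ (e - min e n) := by gcongr
        _ ≤ B ^ e := pow_le_pow_right₀ hB1 (Nat.sub_le _ _)
    _ = _ := mul_comm _ _

theorem abs_mul_mul_le_of_le_pow {δ v h Kd K c : ℝ} {q r : ℕ} (h0 : 0 ≤ h)
    (hδ : |δ| ≤ Kd * h ^ r) (hv : |v| ≤ K * (c * h) ^ q) :
    |δ * v * h| ≤ Kd * K * c ^ q * h ^ (q + r + 1) := by
  rw [abs_mul, abs_mul, abs_of_nonneg h0]
  calc |δ| * |v| * h ≤ (Kd * h ^ r) * (K * (c * h) ^ q) * h := by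
        gcongr; exact (abs_nonneg _).trans hδ
    _ = _ := by ring

theorem perturbed_quadrature_sub_integral_eq {a b : ℝ} {u : ℝ → ℝ} (hua : u a = 0)
    (hub : u b = 0) {N : ℕ} {h : ℝ} (hh : h = (b - a) / N) (c : ℝ) (i j : Fin (N - 1))
    {J A : Matrix (Fin (N - 1)) (Fin (N - 1)) ℝ} (hJ : ∀ k l, J k l = 1)
    (hA : A = J + single i j c) {un : Fin (N - 1) → ℝ}
    (hun : ∀ k, un k = u (a + ((k : ℕ) + 1) * h)) (k : Fin (N - 1)) :
    h * (A *ᵥ un) k - ∫ x in a..b, u x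
      = trapezoidal_error u N a b + if k = i then c * un j * h else 0 := by
  subst hh hA
  rw [trapezoidal_error, trapezoidal_integral_of_endpoints_eq_zero hua hub,
    mulVec_const_one_add_single_apply hJ,
    ← Fin.sum_univ_eq_sum_range (fun k : ℕ => u (a + ((k : ℝ) + 1) * ((b - a) / N)))]
  simp only [hun]
  split_ifs <;> ring

/-- Perturbed truncation error: τ_h(u) = h(J + δE_{i,j})u^n − (∫u)·1 equals
δ u_j^n h e_i + O(h²); with j fixed, u of leading order q at a, and
δ = O(h^r), it satisfies ‖τ_h(u)‖_∞ = O(h^{min(q+r+1,2)}), so the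
perturbation is undetected whenever q + r ≥ 1. -/
theorem perturbed_truncation_error_order (a b : ℝ) (hab : a < b)
    (u : ℝ → ℝ) (M K Kd : ℝ) (q r : ℕ)
    (hu : ContDiffOn ℝ 2 u (Set.Icc a b))
    (hM : ∀ x ∈ Set.Icc a b, |iteratedDerivWithin 2 u (Set.Icc a b) x| ≤ M)
    (hua : u a = 0) (hub : u b = 0)
    (hq : ∀ x ∈ Set.Icc a b, |u x| ≤ K * (x - a) ^ q)
    (j : ℕ) (δ : ℕ → ℝ) :
    ∃ C : ℝ, ∀ N : ℕ, j + 2 ≤ N → ∀ hjN : j < N - 1, ∀ h : ℝ, h = (b - a) / N →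
      |δ N| ≤ Kd * h ^ r →
      ∀ i : Fin (N - 1),
      ∀ J A : Matrix (Fin (N - 1)) (Fin (N - 1)) ℝ, (∀ k l, J k l = 1) →
        A = J + Matrix.single i ⟨j, hjN⟩ (δ N) →
      ∀ un : Fin (N - 1) → ℝ, (∀ k, un k = u (a + ((k : ℕ) + 1) * h)) →
      ∀ k : Fin (N - 1),
        |(h * A.mulVec un k - ∫ x in a..b, u x) -
            (if k = i then δ N * un ⟨j, hjN⟩ * h else 0)| ≤ C * h ^ 2 ∧
        |h * A.mulVec un k - ∫ x in a..b, u x| ≤ C * h ^ (min (q + r + 1) 2) := by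
  obtain ⟨B, hB1, hBh⟩ : ∃ B ≥ (1 : ℝ), ∀ N : ℕ, 0 < N → (b - a) / N ≤ B :=
    ⟨max 1 (b - a), le_max_left _ _, fun N hN =>
      (div_le_self (sub_nonneg.2 hab.le) (by exact_mod_cast hN)).trans (le_max_right _ _)⟩
  set E₀ := (b - a) * M / 12
  set E₁ := Kd * K * ((j : ℝ) + 1) ^ q
  refine ⟨|E₀| * B ^ 2 + |E₁| * B ^ (q + r + 1), ?_⟩
  intro N hN hjN h hh hδ i J A hJ hA un hun k
  have hN0 : 0 < N := by omega
  have h0 : 0 ≤ h := hh ▸ div_nonneg (sub_nonneg.2 hab.le) N.cast_nonneg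
  have htrap : |trapezoidal_error u N a b| ≤ |E₀| * h ^ 2 :=
    hh ▸ (abs_trapezoidal_error_le_of_contDiffOn_Icc hab.le hu hM hN0).trans
      (by gcongr; exact le_abs_self _)
  have hnode : |un ⟨j, hjN⟩| ≤ K * (((j : ℝ) + 1) * h) ^ q := by
    simpa [hun, hh] using hq _ (add_mul_div_mem_Icc hab.le (k := j + 1) (N := N) (by omega))
  have hpert : |δ N * un ⟨j, hjN⟩ * h| ≤ |E₁| * h ^ (q + r + 1) :=
    (abs_mul_mul_le_of_le_pow h0 hδ hnode).trans (by gcongr; exact le_abs_self _)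
  have hpow₂ := pow_le_mul_pow_min h0 (hh ▸ hBh N hN0) hB1 2 (q + r + 1)
  have hpowₚ := pow_le_mul_pow_min h0 (hh ▸ hBh N hN0) hB1 (q + r + 1) 2
  rw [perturbed_quadrature_sub_integral_eq hua hub hh (δ N) i ⟨j, hjN⟩ hJ hA hun k,
    add_sub_cancel_right]
  refine ⟨htrap.trans ?_, ?_⟩
  · gcongr
    nlinarith [abs_nonneg E₀, abs_nonneg E₁, one_le_pow₀ (n := 2) hB1,
      pow_nonneg (zero_le_one.trans hB1) (q + r + 1)]
  · calc _ ≤ |trapezoidal_error u N a b| + |if k = i then δ N * un ⟨j, hjN⟩ * h else 0| :=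
          abs_add_le _ _
      _ ≤ |E₀| * h ^ 2 + |E₁| * h ^ (q + r + 1) := by
          gcongr
          split_ifs
          · exact hpert
          · rw [abs_zero]; positivity
      _ ≤ |E₀| * (B ^ 2 * h ^ min (q + r + 1) 2)
            + |E₁| * (B ^ (q + r + 1) * h ^ min (q + r + 1) 2) := by
          rw [min_comm] at hpow₂
          gcongr
      _ = _ := by ring
end
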